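/- Let n ≥ 1, t > 0 and R ≥ 1 be given, and let x ∈ [0,1)ⁿ be such that λ₁(a_t u_x ℤ^{n+1}) ≥ e^{−R}. Then there exists a rational point v ∈ ℚⁿ such that e^{t−R} ≤ H(v) ≤ e^{t+2nR} and d(x,v) ≤ (1/2)·e^{−(n+1)t/n}. -/
import Mathlib

open Real Filter

/-- The unipotent matrix `u_x` with first column `(1, -x₁, …, -xₙ)`. -/
noncomputable def uMat (n : ℕ) (x : Fin n → ℝ) : Matrix (Fin (n+1)) (Fin (n+1)) ℝ :=
  fun i j => if i = j then 1 else if j = 0 then Fin.cases 0 (fun k => -x k) i else 0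

/-- The diagonal matrix `a_t = diag(e^{-t}, e^{t/n}, …, e^{t/n})`. -/
noncomputable def aMat (n : ℕ) (t : ℝ) : Matrix (Fin (n+1)) (Fin (n+1)) ℝ :=
  Matrix.diagonal (fun i => if i = 0 then Real.exp (-t) else Real.exp (t / n))

/-- The integer vector `𝐯 = (q, p₁, …, pₙ)` viewed in `ℝ^{n+1}` (with the sup norm). -/
noncomputable def intVec (n : ℕ) (q : ℤ) (p : Fin n → ℤ) : Fin (n+1) → ℝ :=
  Fin.cases (q : ℝ) (fun k => (p k : ℝ))

/-- The first minimum `λ₁(g ℤ^{n+1})` of the lattice `g ℤ^{n+1}` for the sup norm. -/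
noncomputable def firstMin (n : ℕ) (g : Matrix (Fin (n+1)) (Fin (n+1)) ℝ) : ℝ :=
  sInf {r | ∃ v : Fin (n+1) → ℤ, v ≠ 0 ∧ ‖g.mulVec (fun i => (v i : ℝ))‖ = r}

/- ---------- auxiliary lemmas ---------- -/

lemma dirichlet_pigeon (n : ℕ) (N : ℕ) (hN : 1 ≤ N) (x : Fin n → ℝ) :
    ∃ (q : ℤ) (p : Fin n → ℤ), 0 < q ∧ q ≤ (N:ℤ)^n ∧
      ∀ i, |q * x i - p i| < 1 / N := by
  have hN0 : (0:ℝ) < N := by exact_mod_cast hN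
  set f : ℤ → (Fin n → ℤ) := fun a i => ⌊(N:ℝ) * Int.fract (a * x i)⌋ with hf
  have hmaps : ∀ a ∈ Finset.Icc (0:ℤ) ((N:ℤ)^n),
      f a ∈ Fintype.piFinset (fun _ : Fin n => Finset.Icc (0:ℤ) ((N:ℤ)-1)) := by
    intro a _
    rw [Fintype.mem_piFinset]
    intro i
    simp only [hf]
    rw [Finset.mem_Icc]
    constructor
    · exact Int.floor_nonneg.2 (mul_nonneg hN0.le (Int.fract_nonneg _))
    · have hlt : (N:ℝ) * Int.fract (a * x i) < ((N:ℤ):ℝ) := by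
        have := Int.fract_lt_one ((a:ℝ) * x i)
        push_cast
        nlinarith [Int.fract_nonneg ((a:ℝ) * x i)]
      have := Int.floor_lt.2 hlt
      omega
  have hcard : (Fintype.piFinset (fun _ : Fin n => Finset.Icc (0:ℤ) ((N:ℤ)-1))).card
      < (Finset.Icc (0:ℤ) ((N:ℤ)^n)).card := by
    rw [Fintype.card_piFinset, Int.card_Icc]
    simp only [Finset.prod_const, Int.card_Icc, Finset.card_univ, Fintype.card_fin]
    have h1 : ((N:ℤ) - 1 + 1 - 0).toNat = N := by omega
    have h2 : ((N:ℤ)^n + 1 - 0).toNat = N^n + 1 := by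
      rw [sub_zero, ← Nat.cast_pow, ← Nat.cast_one, ← Nat.cast_add, Int.toNat_natCast]
    rw [h1, h2]
    omega
  obtain ⟨a, ha, b, hb, hab, hfab⟩ :=
    Finset.exists_ne_map_eq_of_card_lt_of_maps_to hcard hmaps
  rcases hab.lt_or_gt with h | h
  · refine ⟨b - a, fun i => ⌊(b:ℝ) * x i⌋ - ⌊(a:ℝ) * x i⌋, by omega, ?_, ?_⟩
    · rw [Finset.mem_Icc] at ha hb; omega
    · intro i
      have hi : f b i = f a i := by rw [hfab]
      have hfl : |Int.fract ((b:ℝ) * x i) - Int.fract ((a:ℝ) * x i)| < 1 / N := by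
        simp only [hf] at hi
        have h1 := Int.floor_le ((N:ℝ) * Int.fract ((b:ℝ) * x i))
        have h2 := Int.lt_floor_add_one ((N:ℝ) * Int.fract ((b:ℝ) * x i))
        have h3 := Int.floor_le ((N:ℝ) * Int.fract ((a:ℝ) * x i))
        have h4 := Int.lt_floor_add_one ((N:ℝ) * Int.fract ((a:ℝ) * x i))
        rw [hi] at h1 h2
        have g1 : Int.fract ((b:ℝ) * x i) - Int.fract ((a:ℝ) * x i) < 1 / N := by
          rw [lt_div_iff₀ hN0]; nlinarith
        have g2 : Int.fract ((a:ℝ) * x i) - Int.fract ((b:ℝ) * x i) < 1 / N := by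
          rw [lt_div_iff₀ hN0]; nlinarith
        rw [abs_lt]; constructor <;> linarith
      have : ((b - a : ℤ):ℝ) * x i - ((⌊(b:ℝ) * x i⌋ - ⌊(a:ℝ) * x i⌋ : ℤ):ℝ)
          = Int.fract ((b:ℝ) * x i) - Int.fract ((a:ℝ) * x i) := by
        unfold Int.fract; push_cast; ring
      rw [this]; exact hfl
  · refine ⟨a - b, fun i => ⌊(a:ℝ) * x i⌋ - ⌊(b:ℝ) * x i⌋, by omega, ?_, ?_⟩
    · rw [Finset.mem_Icc] at ha hb; omega
    · intro i
      have hi : f b i = f a i := by rw [hfab]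
      have hfl : |Int.fract ((a:ℝ) * x i) - Int.fract ((b:ℝ) * x i)| < 1 / N := by
        simp only [hf] at hi
        have h1 := Int.floor_le ((N:ℝ) * Int.fract ((b:ℝ) * x i))
        have h2 := Int.lt_floor_add_one ((N:ℝ) * Int.fract ((b:ℝ) * x i))
        have h3 := Int.floor_le ((N:ℝ) * Int.fract ((a:ℝ) * x i))
        have h4 := Int.lt_floor_add_one ((N:ℝ) * Int.fract ((a:ℝ) * x i))
        rw [hi] at h1 h2
        have g1 : Int.fract ((a:ℝ) * x i) - Int.fract ((b:ℝ) * x i) < 1 / N := by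
          rw [lt_div_iff₀ hN0]; nlinarith
        have g2 : Int.fract ((b:ℝ) * x i) - Int.fract ((a:ℝ) * x i) < 1 / N := by
          rw [lt_div_iff₀ hN0]; nlinarith
        rw [abs_lt]; constructor <;> linarith
      have : ((a - b : ℤ):ℝ) * x i - ((⌊(a:ℝ) * x i⌋ - ⌊(b:ℝ) * x i⌋ : ℤ):ℝ)
          = Int.fract ((a:ℝ) * x i) - Int.fract ((b:ℝ) * x i) := by
        unfold Int.fract; push_cast; ring
      rw [this]; exact hfl

lemma uMat_mulVec_zero (n : ℕ) (x : Fin n → ℝ) (v : Fin (n+1) → ℝ) :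
    (uMat n x).mulVec v 0 = v 0 := by
  simp [uMat, Matrix.mulVec, dotProduct, Fin.sum_univ_succ,
    (Fin.succ_ne_zero _).symm, Fin.succ_ne_zero]

lemma uMat_mulVec_succ (n : ℕ) (x : Fin n → ℝ) (v : Fin (n+1) → ℝ) (k : Fin n) :
    (uMat n x).mulVec v k.succ = v k.succ - x k * v 0 := by
  simp only [uMat, Matrix.mulVec, dotProduct, Fin.sum_univ_succ,
    Fin.succ_ne_zero, if_false, if_true, eq_self_iff_true, Fin.cases_succ, Fin.succ_inj]
  simp [ite_mul, Finset.sum_ite_eq]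
  ring

lemma prodVec_zero (n : ℕ) (x : Fin n → ℝ) (t : ℝ) (v : Fin (n+1) → ℝ) :
    (aMat n t * uMat n x).mulVec v 0 = Real.exp (-t) * v 0 := by
  rw [← Matrix.mulVec_mulVec, aMat, Matrix.mulVec_diagonal, uMat_mulVec_zero]
  simp

lemma prodVec_succ (n : ℕ) (x : Fin n → ℝ) (t : ℝ) (v : Fin (n+1) → ℝ) (k : Fin n) :
    (aMat n t * uMat n x).mulVec v k.succ
      = Real.exp (t / n) * (v k.succ - x k * v 0) := by
  rw [← Matrix.mulVec_mulVec, aMat, Matrix.mulVec_diagonal, uMat_mulVec_succ]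
  simp [Fin.succ_ne_zero]

lemma firstMin_le (n : ℕ) (g : Matrix (Fin (n+1)) (Fin (n+1)) ℝ)
    (v : Fin (n+1) → ℤ) (hv : v ≠ 0) :
    firstMin n g ≤ ‖g.mulVec (fun i => (v i : ℝ))‖ := by
  apply csInf_le
  · refine ⟨0, fun r hr => ?_⟩
    obtain ⟨w, -, hw⟩ := hr
    rw [← hw]; exact norm_nonneg _
  · exact ⟨v, hv, rfl⟩

/-- The key lower bound on the denominator coming from the first-minimum hypothesis. -/
lemma q_lower (n : ℕ) (t R : ℝ) (x : Fin n → ℝ)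
    (hlam : Real.exp (-R) ≤ firstMin n (aMat n t * uMat n x))
    (q : ℤ) (p : Fin n → ℤ) (hq : 0 < q)
    (herr : ∀ k, |(q:ℝ) * x k - p k| < (1/2) * Real.exp (-(t/(n:ℝ)) - R)) :
    Real.exp (t - R) ≤ (q:ℝ) := by
  by_contra hcon
  push_neg at hcon
  set w : Fin (n+1) → ℤ := Fin.cases q p with hwdef
  have hw : w ≠ 0 := by
    intro h
    have := congrFun h 0
    simp only [hwdef, Fin.cases_zero, Pi.zero_apply] at this
    omega
  have h1 : Real.exp (-R) ≤ ‖(aMat n t * uMat n x).mulVec (fun i => (w i : ℝ))‖ :=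
    le_trans hlam (firstMin_le n _ w hw)
  have h2 : ‖(aMat n t * uMat n x).mulVec (fun i => (w i : ℝ))‖ < Real.exp (-R) := by
    rw [pi_norm_lt_iff (Real.exp_pos _)]
    intro i
    induction i using Fin.cases with
    | zero =>
        rw [prodVec_zero]
        simp only [hwdef, Fin.cases_zero]
        rw [Real.norm_eq_abs, abs_of_nonneg (by positivity)]
        calc Real.exp (-t) * (q:ℝ) < Real.exp (-t) * Real.exp (t - R) := by
              apply mul_lt_mul_of_pos_left hcon (Real.exp_pos _)
          _ = Real.exp (-R) := by rw [← Real.exp_add]; ring_nf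
    | succ k =>
        rw [prodVec_succ]
        simp only [hwdef, Fin.cases_succ, Fin.cases_zero]
        rw [Real.norm_eq_abs, abs_mul, abs_of_pos (Real.exp_pos _)]
        have : |(p k : ℝ) - x k * q| = |(q:ℝ) * x k - p k| := by
          rw [abs_sub_comm]; ring_nf
        rw [this]
        calc Real.exp (t/(n:ℝ)) * |(q:ℝ) * x k - p k|
            < Real.exp (t/(n:ℝ)) * ((1/2) * Real.exp (-(t/(n:ℝ)) - R)) :=
              mul_lt_mul_of_pos_left (herr k) (Real.exp_pos _)
          _ = (1/2) * Real.exp (-R) := by rw [show Real.exp (t/(n:ℝ)) * ((1/2) * Real.exp (-(t/(n:ℝ)) - R)) = (1/2) * (Real.exp (t/(n:ℝ)) * Real.exp (-(t/(n:ℝ)) - R)) by ring, ← Real.exp_add]; ring_nf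
          _ < Real.exp (-R) := by linarith [Real.exp_pos (-R)]
  linarith

set_option maxHeartbeats 2000000 in
/-- Rational points near badly approximable points: if `λ₁(a_t u_x ℤ^{n+1}) ≥ e^{-R}`,
there is a rational point `v = p/q` (in lowest terms) with
`e^{t-R} ≤ H(v) ≤ e^{t+2nR}` and `d(x,v) ≤ ½ e^{-(n+1)t/n}`. -/
theorem rational_near_bad (n : ℕ) (hn : 1 ≤ n) (t R : ℝ) (ht : 0 < t) (hR : 1 ≤ R)
    (x : Fin n → ℝ) (hx : ∀ i, 0 ≤ x i ∧ x i < 1)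
    (hlam : Real.exp (-R) ≤ firstMin n (aMat n t * uMat n x)) :
    ∃ (q : ℤ) (p : Fin n → ℤ), 0 < q ∧
      Finset.univ.gcd (fun i : Fin (n+1) => (Fin.cases q p i : ℤ)) = 1 ∧
      Real.exp (t - R) ≤ ‖intVec n q p‖ ∧
      ‖intVec n q p‖ ≤ Real.exp (t + 2 * n * R) ∧
      ‖x - fun i => (p i : ℝ) / q‖ ≤ (1 / 2) * Real.exp (-(((n : ℝ) + 1) / n) * t) := by
  have hn0 : (0:ℝ) < n := by exact_mod_cast hn
  set δ : ℝ := (1/2) * Real.exp (-(t/(n:ℝ)) - R) with hδ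
  have hδpos : 0 < δ := by positivity
  set N : ℕ := ⌈2 * Real.exp (t/(n:ℝ) + R)⌉₊ with hNdef
  have hE1 : (1:ℝ) ≤ Real.exp (t/(n:ℝ) + R) := by
    rw [← Real.exp_zero]
    apply Real.exp_le_exp.2
    have : 0 < t / (n:ℝ) := by positivity
    linarith
  have hN1 : 1 ≤ N := by
    rw [hNdef]
    apply Nat.one_le_iff_ne_zero.2
    intro h
    have := Nat.ceil_eq_zero.1 h
    nlinarith
  have hNpos : (0:ℝ) < N := by exact_mod_cast hN1
  have hNge : 2 * Real.exp (t/(n:ℝ) + R) ≤ (N:ℝ) := Nat.le_ceil _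
  have hinvN : 1 / (N:ℝ) ≤ δ := by
    rw [hδ]
    have h2 : (1:ℝ)/2 * Real.exp (-(t/(n:ℝ)) - R) = 1 / (2 * Real.exp (t/(n:ℝ) + R)) := by
      rw [Real.exp_sub, Real.exp_neg]
      field_simp
      rw [← Real.exp_add]
      congr 1
      field_simp
    rw [h2]
    apply one_div_le_one_div_of_le (by positivity) hNge
  obtain ⟨q, p, hq, hqN, herr⟩ := dirichlet_pigeon n N hN1 x
  have herrδ : ∀ i, |(q:ℝ) * x i - p i| < δ := fun i => lt_of_lt_of_le (herr i) hinvN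
  -- divide by the gcd
  set g : ℤ := Finset.univ.gcd (fun i : Fin (n+1) => (Fin.cases q p i : ℤ)) with hgdef
  have hgdvd_q : g ∣ q := by
    have := Finset.gcd_dvd (Finset.mem_univ (0 : Fin (n+1))) (f := fun i : Fin (n+1) => (Fin.cases q p i : ℤ))
    simpa using this
  have hgdvd_p : ∀ k : Fin n, g ∣ p k := by
    intro k
    have := Finset.gcd_dvd (Finset.mem_univ (k.succ : Fin (n+1))) (f := fun i : Fin (n+1) => (Fin.cases q p i : ℤ))
    simpa using this
  have hgnn : (0:ℤ) ≤ g := Int.nonneg_of_normalize_eq_self Finset.normalize_gcd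
  have hgne : g ≠ 0 := by
    intro h
    rw [h] at hgdvd_q
    have := zero_dvd_iff.1 hgdvd_q
    omega
  have hgpos : 0 < g := lt_of_le_of_ne hgnn (Ne.symm hgne)
  set q' : ℤ := q / g with hq'def
  set p' : Fin n → ℤ := fun k => p k / g with hp'def
  have hqq' : q = g * q' := (Int.mul_ediv_cancel' hgdvd_q).symm
  have hpp' : ∀ k, p k = g * p' k := fun k => (Int.mul_ediv_cancel' (hgdvd_p k)).symm
  have hq'pos : 0 < q' := by
    rcases le_or_gt q' 0 with h | h
    · exfalso
      have h2 : g * q' ≤ 0 := mul_nonpos_iff.2 (Or.inl ⟨hgnn, h⟩)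
      rw [← hqq'] at h2
      omega
    · exact h
  have hq'le : q' ≤ q := by
    have h2 : q' ≤ g * q' := le_mul_of_one_le_left hq'pos.le hgpos
    rw [← hqq'] at h2
    exact h2
  clear_value g q' p'
  have hq'r : (0:ℝ) < (q':ℝ) := by exact_mod_cast hq'pos
  have hgr : (1:ℝ) ≤ (g:ℝ) := by exact_mod_cast hgpos
  have herr' : ∀ i, |(q':ℝ) * x i - p' i| < δ := by
    intro i
    have e1 : (q:ℝ) = (g:ℝ) * q' := by rw [hqq']; push_cast; ring
    have e2 : (p i:ℝ) = (g:ℝ) * p' i := by rw [hpp' i]; push_cast; ring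
    have h1 : (q:ℝ) * x i - p i = g * ((q':ℝ) * x i - p' i) := by rw [e1, e2]; ring
    have h2 := herrδ i
    rw [h1, abs_mul, abs_of_pos (by linarith : (0:ℝ) < (g:ℝ))] at h2
    nlinarith [abs_nonneg ((q':ℝ) * x i - p' i)]
  have hq'low : Real.exp (t - R) ≤ (q':ℝ) := q_lower n t R x hlam q' p' hq'pos herr'
  -- bounds on p'
  have hδhalf : δ < 1/2 := by
    rw [hδ]
    have : Real.exp (-(t/(n:ℝ)) - R) < 1 := by
      rw [← Real.exp_zero]
      apply Real.exp_lt_exp.2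
      have : 0 < t / (n:ℝ) := by positivity
      linarith
    linarith
  have hp'bd : ∀ k, 0 ≤ p' k ∧ p' k ≤ q' := by
    intro k
    have h := herr' k
    rw [abs_lt] at h
    have hx1 := (hx k).1
    have hx2 := (hx k).2
    have hq'r1 : (1:ℝ) ≤ (q':ℝ) := by exact_mod_cast hq'pos
    constructor
    · have hr : (-1:ℝ) < (p' k : ℝ) := by
        nlinarith [mul_nonneg hq'r.le hx1]
      have h2 : (-1:ℤ) < p' k := by exact_mod_cast hr
      omega
    · have hr : (p' k : ℝ) < (q':ℝ) + 1 := by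
        nlinarith [mul_lt_mul_of_pos_left hx2 hq'r]
      have h2 : p' k < q' + 1 := by exact_mod_cast hr
      omega
  -- the sup norm of the integer vector is q'
  have hnorm : ‖intVec n q' p'‖ = (q':ℝ) := by
    apply le_antisymm
    · rw [pi_norm_le_iff_of_nonneg hq'r.le]
      intro i
      induction i using Fin.cases with
      | zero => simp [intVec, Real.norm_eq_abs, abs_of_nonneg hq'r.le]
      | succ k =>
          simp only [intVec, Fin.cases_succ, Real.norm_eq_abs]
          rw [abs_of_nonneg (by exact_mod_cast (hp'bd k).1)]
          exact_mod_cast (hp'bd k).2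
    · have h := norm_le_pi_norm (intVec n q' p') 0
      simpa [intVec, Real.norm_eq_abs, abs_of_nonneg hq'r.le] using h
  -- upper bound on N and q'
  have hNle : (N:ℝ) ≤ Real.exp (t/(n:ℝ) + 2*R) := by
    have h1 : (N:ℝ) < 2 * Real.exp (t/(n:ℝ) + R) + 1 := by
      rw [hNdef]; exact Nat.ceil_lt_add_one (by positivity)
    have e1 : Real.exp (t/(n:ℝ) + 2*R) = Real.exp (t/(n:ℝ) + R) * Real.exp R := by
      rw [← Real.exp_add]; ring_nf
    have e2 : Real.exp 1 ≤ Real.exp R := Real.exp_le_exp.2 hR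
    have e3 : (2.7182818283:ℝ) < Real.exp 1 := Real.exp_one_gt_d9
    have e4 : Real.exp 1 ≤ Real.exp (t/(n:ℝ) + R) := by
      apply Real.exp_le_exp.2
      have : 0 < t / (n:ℝ) := by positivity
      linarith
    nlinarith
  have hupper : (q':ℝ) ≤ Real.exp (t + 2*(n:ℝ)*R) := by
    have hqN' : (q':ℝ) ≤ (N:ℝ)^n := by
      have : q' ≤ (N:ℤ)^n := le_trans hq'le hqN
      exact_mod_cast this
    calc (q':ℝ) ≤ (N:ℝ)^n := hqN'
      _ ≤ (Real.exp (t/(n:ℝ) + 2*R))^n := pow_le_pow_left₀ (by positivity) hNle n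
      _ = Real.exp ((n:ℝ) * (t/(n:ℝ) + 2*R)) := by rw [← Real.exp_nat_mul]
      _ = Real.exp (t + 2*(n:ℝ)*R) := by
          congr 1
          field_simp
  -- distance bound
  have hdist : ∀ i, |x i - (p' i:ℝ) / q'| ≤ (1/2) * Real.exp (-(((n:ℝ)+1)/n) * t) := by
    intro i
    have e : x i - (p' i:ℝ)/q' = ((q':ℝ) * x i - p' i)/q' := by field_simp
    rw [e, abs_div, abs_of_pos hq'r]
    have h1 : |(q':ℝ)*x i - p' i| / q' ≤ δ / Real.exp (t-R) :=
      div_le_div₀ hδpos.le (herr' i).le (Real.exp_pos _) hq'low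
    have h2 : δ / Real.exp (t-R) = (1/2) * Real.exp (-(((n:ℝ)+1)/n) * t) := by
      rw [hδ, mul_div_assoc, ← Real.exp_sub]
      congr 1
      have hnne : (n:ℝ) ≠ 0 := ne_of_gt hn0
      field_simp
      ring
    linarith
  refine ⟨q', p', hq'pos, ?_, ?_, ?_, ?_⟩
  · have h := Finset.gcd_div_eq_one (f := fun i : Fin (n+1) => (Fin.cases q p i : ℤ))
      (Finset.mem_univ (0 : Fin (n+1))) (by simp; omega)
    rw [← hgdef] at h
    rw [show (fun i : Fin (n+1) => (Fin.cases q' p' i : ℤ))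
        = fun i : Fin (n+1) => (Fin.cases q p i : ℤ) / g from ?_]
    · exact h
    · funext i
      induction i using Fin.cases with
      | zero => simp [hq'def]
      | succ k => simp [hp'def]
  · rw [hnorm]; exact hq'low
  · rw [hnorm]
    exact hupper
  · rw [pi_norm_le_iff_of_nonneg (by positivity)]
    intro i
    simpa [Real.norm_eq_abs] using hdist i
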